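/- arXiv:1112.2073 — 2 statements merged into one kernel-verified Lean document; each statement's English description precedes it below -/
import Mathlib

section
/- The q-Fibonacci and q-Lucas polynomials are related by L_n(x,s|q) = F_{n+1}(x,s|q) + s F_{n-1}(x,s|q) for n >= 1. -/
open Finset

noncomputable def qPoch (q z : ℂ) (n : ℕ) : ℂ := ∏ j ∈ range n, (1 - z * q ^ j)

noncomputable def qBinom (q : ℂ) (n k : ℕ) : ℂ :=
  qPoch q q n / (qPoch q q k * qPoch q q (n - k))

noncomputable def qBracket (q : ℂ) (n : ℕ) : ℂ := (1 - q ^ n) / (1 - q)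

/-- The q-Fibonacci polynomials of Cigler. -/
noncomputable def qFib (q : ℂ) : ℕ → ℂ → ℂ → ℂ
  | 0, _, _ => 0
  | n + 1, x, s =>
      ∑ k ∈ range (n / 2 + 1),
        q ^ (k * (k + 1) / 2) * qBinom q (n - k) k * s ^ k * x ^ (n - 2 * k)

/-- The q-Lucas polynomials of Cigler (for `n ≥ 1`). -/
noncomputable def qLuc (q : ℂ) (n : ℕ) (x s : ℂ) : ℂ :=
  ∑ k ∈ range (n / 2 + 1),
    q ^ (k * (k - 1) / 2) * (qBracket q n / qBracket q (n - k)) *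
      qBinom q (n - k) k * s ^ k * x ^ (n - 2 * k)

lemma one_sub_pow_ne (q : ℂ) (hq : ∀ m : ℕ, 1 ≤ m → q ^ m ≠ 1) (m : ℕ) (hm : 1 ≤ m) :
    (1 : ℂ) - q ^ m ≠ 0 := sub_ne_zero.mpr (Ne.symm (hq m hm))

lemma qPoch_succ (q : ℂ) (m : ℕ) : qPoch q q (m + 1) = qPoch q q m * (1 - q ^ (m + 1)) := by
  unfold qPoch
  rw [prod_range_succ, pow_succ']

lemma qPoch_ne_zero (q : ℂ) (hq : ∀ m : ℕ, 1 ≤ m → q ^ m ≠ 1) (n : ℕ) :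
    qPoch q q n ≠ 0 := by
  unfold qPoch
  refine Finset.prod_ne_zero_iff.mpr fun j _ => ?_
  rw [← pow_succ']
  exact one_sub_pow_ne q hq (j + 1) (by omega)

lemma qBracket_ne_zero (q : ℂ) (hq : ∀ m : ℕ, 1 ≤ m → q ^ m ≠ 1) (n : ℕ) (hn : 1 ≤ n) :
    qBracket q n ≠ 0 := by
  have := one_sub_pow_ne q hq 1 le_rfl
  rw [pow_one] at this
  exact div_ne_zero (one_sub_pow_ne q hq n hn) this

lemma key (q : ℂ) (hq : ∀ m : ℕ, 1 ≤ m → q ^ m ≠ 1) (n k : ℕ) (hk : 1 ≤ k) (h2k : 2 * k ≤ n) :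
    qBracket q n / qBracket q (n - k) * qBinom q (n - k) k
      = q ^ k * qBinom q (n - k) k + qBinom q (n - k - 1) (k - 1) := by
  obtain ⟨b, rfl⟩ : ∃ b, k = b + 1 := ⟨k - 1, by omega⟩
  obtain ⟨a, rfl⟩ : ∃ a, n = a + b + 2 := ⟨n - b - 2, by omega⟩
  have hab : b ≤ a := by omega
  have h1 : a + b + 2 - (b + 1) = a + 1 := by omega
  have h2 : a + 1 - 1 = a := by omega
  have h3 : b + 1 - 1 = b := by omega
  have h4 : a + 1 - (b + 1) = a - b := by omega
  rw [h1, h2, h3]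
  unfold qBinom qBracket
  rw [h4, qPoch_succ q a, qPoch_succ q b]
  have Pa := qPoch_ne_zero q hq a
  have Pb := qPoch_ne_zero q hq b
  have Pab := qPoch_ne_zero q hq (a - b)
  have e1 := one_sub_pow_ne q hq (a + 1) (by omega)
  have e2 := one_sub_pow_ne q hq (b + 1) (by omega)
  have e3 := one_sub_pow_ne q hq 1 (by omega)
  have e4 : q ^ (a + b + 2) = q ^ (a + 1) * q ^ (b + 1) := by
    rw [← pow_add]; ring_nf
  rw [pow_one] at e3
  field_simp
  linear_combination (qPoch q q a * qPoch q q b * qPoch q q (a - b)) * e4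

theorem qLucas_eq_qFib_combination (q : ℂ) (hq0 : q ≠ 0) (hq : ∀ m : ℕ, 1 ≤ m → q ^ m ≠ 1)
    (n : ℕ) (hn : 1 ≤ n) (x s : ℂ) :
    qLuc q n x s = qFib q (n + 1) x s + s * qFib q (n - 1) x s := by
  obtain _ | n := n; · omega
  obtain _ | m := n
  · have hb := qBracket_ne_zero q hq 1 le_rfl
    simp [qLuc, qFib, div_self hb]
  · have hd : (m + 2) / 2 = m / 2 + 1 := by omega
    rw [show m + 2 - 1 = m + 1 by omega]
    simp only [qLuc, qFib, hd]
    rw [show m + 1 + 1 = m + 2 from rfl]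
    rw [Finset.sum_range_succ' _ (m / 2 + 1), Finset.sum_range_succ' _ (m / 2 + 1),
      Finset.mul_sum]
    have h0 : qBracket q (m + 2) / qBracket q (m + 2 - 0) = 1 := by
      rw [Nat.sub_zero]
      exact div_self (qBracket_ne_zero q hq (m + 2) (by omega))
    rw [h0]
    have hsum : (∑ k ∈ range (m / 2 + 1),
          q ^ ((k + 1) * (k + 1 - 1) / 2) * (qBracket q (m + 2) / qBracket q (m + 2 - (k + 1))) *
            qBinom q (m + 2 - (k + 1)) (k + 1) * s ^ (k + 1) * x ^ (m + 2 - 2 * (k + 1)))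
        = (∑ k ∈ range (m / 2 + 1),
          (q ^ ((k + 1) * (k + 1 + 1) / 2) * qBinom q (m + 2 - (k + 1)) (k + 1) * s ^ (k + 1) *
            x ^ (m + 2 - 2 * (k + 1)) +
          s * (q ^ (k * (k + 1) / 2) * qBinom q (m - k) k * s ^ k * x ^ (m - 2 * k)))) := by
      refine Finset.sum_congr rfl fun j hj => ?_
      have hj' : j ≤ m / 2 := by simpa using Nat.lt_succ_iff.mp (Finset.mem_range.mp hj)
      have h2j : 2 * j ≤ m := by omega
      have K := key q hq (m + 2) (j + 1) (by omega) (by omega)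
      rw [show m + 2 - (j + 1) - 1 = m - j by omega, show j + 1 - 1 = j from rfl] at K
      have E1 : (j + 1) * (j + 1 - 1) / 2 = j * (j + 1) / 2 := by
        rw [Nat.add_sub_cancel, Nat.mul_comm]
      have E2 : (j + 1) * (j + 1 + 1) / 2 = j * (j + 1) / 2 + (j + 1) := by
        have h : (j + 1) * (j + 1 + 1) = j * (j + 1) + 2 * (j + 1) := by ring
        rw [h, Nat.add_mul_div_left _ _ (by norm_num : (0:ℕ) < 2)]
      have E3 : m + 2 - 2 * (j + 1) = m - 2 * j := by omega
      rw [E1, E2, E3, pow_add]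
      linear_combination (q ^ (j * (j + 1) / 2) * s ^ (j + 1) * x ^ (m - 2 * j)) * K
    rw [hsum, Finset.sum_add_distrib]
    norm_num
    ring
end

section
/- Let kappa be real, q = exp(-2 kappa^2), b a complex constant, s complex, and n >= 1. Then integral over R of L_n(b e^{i kappa x}, s | q) e^{i x y - x^2/2} dx = sqrt(2 pi) q^{n^2/4} L_n(b e^{-kappa y}, s | 1/q) e^{-y^2/2} for all real y. -/
/-! Writing `L_n(x, s | q) = ∑ₖ cₖ(q) sᵏ x^(n-2k)`, the integrand is a finite sum of Gaussians
`cₖ(q) sᵏ b^(n-2k) exp(i (κ (n-2k) + y) x - x²/2)`, whose integrals are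
`√(2π) exp(-(κ (n-2k) + y)²/2)`. Since `(n-2k)² = n² - 4k(n-k)` and `q = exp(-2κ²)`, this is
`√(2π) q^(n²/4) q^(-k(n-k)) exp(-κy)^(n-2k) exp(-y²/2)`, and the factor `q^(-k(n-k))` turns
`cₖ(q)` into `cₖ(1/q)` by the inversion rules `[j]_{1/q} = q^(1-j) [j]_q` and
`[m choose k]_{1/q} = q^(-k(m-k)) [m choose k]_q`. -/

open Finset Real

theorem Nat.add_choose_two (a b : ℕ) : (a + b).choose 2 = a.choose 2 + b.choose 2 + a * b := by
  induction b with
  | zero => simp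
  | succ b ih =>
    rw [← add_assoc, Nat.choose_succ_succ, ih, Nat.choose_succ_succ b, Nat.choose_one_right,
      Nat.choose_one_right]
    ring

section Inversion

/- Only `q ≠ 0` is needed: inverting `q` multiplies numerators and denominators by nonzero
factors, which is compatible with the junk value `x / 0 = 0` at roots of unity. -/

variable {q : ℂ}

lemma one_sub_inv_pow (hq : q ≠ 0) (j : ℕ) : 1 - q⁻¹ ^ j = -q⁻¹ ^ j * (1 - q ^ j) := by
  rw [inv_pow]
  field_simp
  ring

lemma qPoch_inv (hq : q ≠ 0) (m : ℕ) :
    qPoch q⁻¹ q⁻¹ m = (-1) ^ m * q⁻¹ ^ (m + 1).choose 2 * qPoch q q m := by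
  induction m with
  | zero => simp [qPoch]
  | succ m ih =>
    simp only [qPoch, prod_range_succ, ← pow_succ'] at ih ⊢
    rw [ih, one_sub_inv_pow hq, Nat.choose_succ_succ (m + 1), Nat.choose_one_right]
    ring

lemma qBinom_inv (hq : q ≠ 0) {n k : ℕ} (hk : k ≤ n) :
    qBinom q⁻¹ n k = q⁻¹ ^ (k * (n - k)) * qBinom q n k := by
  obtain ⟨j, rfl⟩ := Nat.exists_eq_add_of_le hk
  have hexp : (k + j + 1).choose 2 = (k + 1).choose 2 + (j + 1).choose 2 + k * j := by
    rw [add_right_comm, Nat.add_choose_two, Nat.add_choose_two j 1]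
    simp only [Nat.choose_succ_self]
    ring
  rw [qBinom, qBinom, add_tsub_cancel_left, qPoch_inv hq, qPoch_inv hq, qPoch_inv hq, hexp,
    mul_mul_mul_comm _ (qPoch q q k), mul_div_mul_comm]
  congr 1
  field_simp
  ring

lemma qBracket_inv (hq : q ≠ 0) (j : ℕ) : qBracket q⁻¹ j = q * q⁻¹ ^ j * qBracket q j := by
  have h1 := one_sub_inv_pow hq 1
  rw [pow_one, pow_one] at h1
  rw [qBracket, qBracket, one_sub_inv_pow hq, h1, mul_div_mul_comm]
  congr 1
  field_simp

end Inversion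

noncomputable def qLucCoeff (q : ℂ) (n k : ℕ) : ℂ :=
  q ^ (k * (k - 1) / 2) * (qBracket q n / qBracket q (n - k)) * qBinom q (n - k) k

lemma qLuc_eq_sum (q : ℂ) (n : ℕ) (x s : ℂ) :
    qLuc q n x s = ∑ k ∈ range (n / 2 + 1), qLucCoeff q n k * s ^ k * x ^ (n - 2 * k) :=
  rfl

lemma qLucCoeff_inv {q : ℂ} (hq : q ≠ 0) {n k : ℕ} (hk : 2 * k ≤ n) :
    qLucCoeff q⁻¹ n k = q⁻¹ ^ (k * (n - k)) * qLucCoeff q n k := by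
  obtain ⟨j, rfl⟩ : ∃ j, n = j + k + k := ⟨n - 2 * k, by omega⟩
  set T := k * (k - 1) / 2
  have hT : q⁻¹ ^ T = q⁻¹ ^ (T * 2) * q ^ T := by
    rw [pow_mul, sq, mul_assoc, inv_pow, inv_mul_cancel₀ (pow_ne_zero T hq), mul_one]
  have hbracket : q * q⁻¹ ^ (j + k + k) / (q * q⁻¹ ^ (j + k)) = q⁻¹ ^ k := by
    rw [pow_add q⁻¹ (j + k)]
    field_simp
  have hexp : k * (j + k) = T * 2 + k + k * j := by
    rw [Nat.div_two_mul_two_of_even (Nat.even_mul_pred_self k)]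
    rcases k with _ | k
    · simp
    · simp only [Nat.add_sub_cancel]
      ring
  simp only [qLucCoeff, Nat.add_sub_cancel]
  rw [qBracket_inv hq, qBracket_inv hq, mul_div_mul_comm, hbracket, qBinom_inv hq le_add_self,
    Nat.add_sub_cancel, hT, hexp, pow_add, pow_add]
  ring

section Fourier

open Complex

lemma integrable_cexp_I_mul_sub_sq_div_two (t : ℝ) :
    MeasureTheory.Integrable (fun x : ℝ ↦ cexp (I * t * x - x ^ 2 / 2)) := by
  convert integrable_cexp_quadratic' (b := -1 / 2) (by norm_num) (I * t) 0 using 2 with x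
  ring_nf

lemma integral_cexp_I_mul_sub_sq_div_two (t : ℝ) :
    ∫ x : ℝ, cexp (I * t * x - x ^ 2 / 2) = (√(2 * π) : ℂ) * cexp (-(t : ℂ) ^ 2 / 2) := by
  have hquad : ∀ x : ℝ, cexp (I * t * x - x ^ 2 / 2) = cexp (-1 / 2 * x ^ 2 + I * t * x + 0) :=
    fun x ↦ by ring_nf
  simp_rw [hquad]
  rw [integral_cexp_quadratic (by norm_num), show (π : ℂ) / -(-1 / 2) = ((2 * π : ℝ) : ℂ) by
    push_cast; ring, show (1 / 2 : ℂ) = ((1 / 2 : ℝ) : ℂ) by norm_num,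
    ← ofReal_cpow (by positivity), ← Real.sqrt_eq_rpow]
  congr 2
  rw [mul_pow, I_sq]
  ring

lemma qLuc_mul_cexp_eq_sum (q b s : ℂ) (n : ℕ) (κ x y : ℝ) :
    qLuc q n (b * cexp (I * κ * x)) s * cexp (I * x * y - x ^ 2 / 2) =
      ∑ k ∈ range (n / 2 + 1), qLucCoeff q n k * s ^ k * b ^ (n - 2 * k) *
        cexp (I * ↑(κ * ↑(n - 2 * k) + y) * x - x ^ 2 / 2) := by
  rw [qLuc_eq_sum, sum_mul]
  refine sum_congr rfl fun k _ ↦ ?_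
  have hexp : cexp (↑(n - 2 * k) * (I * κ * x)) * cexp (I * x * y - x ^ 2 / 2) =
      cexp (I * ↑(κ * ↑(n - 2 * k) + y) * x - x ^ 2 / 2) := by
    rw [← Complex.exp_add]
    push_cast
    ring_nf
  rw [mul_pow, ← Complex.exp_nat_mul, ← hexp]
  ring

end Fourier

lemma rexp_neg_sq_div_two_shift (κ y : ℝ) {n k : ℕ} (hk : 2 * k ≤ n) :
    rexp (-(κ * ↑(n - 2 * k) + y) ^ 2 / 2) =
      rexp (-2 * κ ^ 2) ^ ((n : ℝ) ^ 2 / 4) * (rexp (-2 * κ ^ 2))⁻¹ ^ (k * (n - k)) *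
        rexp (-(κ * y)) ^ (n - 2 * k) * rexp (-y ^ 2 / 2) := by
  rw [← Real.exp_mul, ← Real.exp_neg, ← Real.exp_nat_mul, ← Real.exp_nat_mul, ← Real.exp_add,
    ← Real.exp_add, ← Real.exp_add]
  congr 1
  push_cast [Nat.cast_sub hk, Nat.cast_sub (by omega : k ≤ n)]
  ring

theorem qLuc_fourier_transform_general (κ : ℝ) (b s : ℂ) (n : ℕ) (y : ℝ) :
    (∫ x : ℝ, qLuc (Real.exp (-2 * κ ^ 2) : ℂ) n
          (b * Complex.exp (Complex.I * κ * x)) s *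
        Complex.exp (Complex.I * x * y - x ^ 2 / 2)) =
      ((Real.sqrt (2 * π) * (Real.exp (-2 * κ ^ 2)) ^ ((n : ℝ) ^ 2 / 4) : ℝ) : ℂ) *
        qLuc ((Real.exp (-2 * κ ^ 2) : ℂ))⁻¹ n (b * (Real.exp (-(κ * y)) : ℂ)) s *
        Complex.exp (-(y ^ 2) / 2) := by
  set q : ℂ := (Real.exp (-2 * κ ^ 2) : ℂ) with hq_def
  have hq : q ≠ 0 := Complex.ofReal_ne_zero.2 (Real.exp_pos _).ne'
  simp_rw [qLuc_mul_cexp_eq_sum]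
  rw [MeasureTheory.integral_finsetSum _
    fun k _ ↦ (integrable_cexp_I_mul_sub_sq_div_two _).const_mul _]
  simp_rw [MeasureTheory.integral_const_mul, integral_cexp_I_mul_sub_sq_div_two]
  rw [qLuc_eq_sum, mul_sum, sum_mul]
  refine sum_congr rfl fun k hk_mem ↦ ?_
  have hk : 2 * k ≤ n := by have := mem_range.1 hk_mem; omega
  have hgauss := congrArg ((↑) : ℝ → ℂ) (rexp_neg_sq_div_two_shift κ y hk)
  push_cast at hgauss
  rw [qLucCoeff_inv hq hk, hq_def]
  push_cast
  rw [hgauss]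
  ring

theorem qLuc_fourier_transform (κ : ℝ) (hκ : κ ≠ 0) (b s : ℂ) (n : ℕ) (hn : 1 ≤ n) (y : ℝ) :
    (∫ x : ℝ, qLuc (Real.exp (-2 * κ ^ 2) : ℂ) n
          (b * Complex.exp (Complex.I * κ * x)) s *
        Complex.exp (Complex.I * x * y - x ^ 2 / 2)) =
      ((Real.sqrt (2 * π) * (Real.exp (-2 * κ ^ 2)) ^ ((n : ℝ) ^ 2 / 4) : ℝ) : ℂ) *
        qLuc ((Real.exp (-2 * κ ^ 2) : ℂ))⁻¹ n (b * (Real.exp (-(κ * y)) : ℂ)) s *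
        Complex.exp (-(y ^ 2) / 2) :=
  qLuc_fourier_transform_general κ b s n y
end
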